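/- Define the microlocal multiplicity m_M of a loopless matroid M of rank d by m_M = (−1)^d Σ_{F ∈ L(M)} 2^{rk F} χ_{M^F}(1/2) P_{M_F}(1), where P denotes the matroid Kazhdan–Lusztig polynomial. Then m satisfies, for every loopless matroid M, the relation (−1)^{rk M} P_M(1) = Σ_{F ∈ L(M)} m_{M_F} (−1)^{rk F} χ_{M^F}(2). -/

import Mathlib

open scoped Matroid

variable {α : Type*}

/-- The rank of a set in a matroid: the maximum size of an independent subset of the set. -/
noncomputable def Matroid.rkSet (M : Matroid α) (S : Set α) : ℕ :=
  ⨆ I : {I : Set α // M.Indep I ∧ I ⊆ S}, I.1.ncard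

/-- The rank of a matroid: the rank of its ground set. -/
noncomputable def Matroid.rank (M : Matroid α) : ℕ := M.rkSet M.E

/-- Deletion of a set from a matroid. -/
noncomputable def Matroid.del (M : Matroid α) (D : Set α) : Matroid α := M ↾ (M.E \ D)

/-- Contraction of a matroid by a set, defined via duality: `M / C = (M✶ \ C)✶`. -/
noncomputable def Matroid.con (M : Matroid α) (C : Set α) : Matroid α := (M✶.del C)✶

/-- A matroid is loopless if every singleton of the ground set is independent. -/
def Matroid.IsLoopless (M : Matroid α) : Prop := ∀ e ∈ M.E, M.Indep {e}

/-- A matroid is simple if every (at most two-element) subset `{e, f}` of the ground set is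
independent. -/
def Matroid.IsSimple (M : Matroid α) : Prop := ∀ e ∈ M.E, ∀ f ∈ M.E, M.Indep {e, f}

/-- The characteristic polynomial of a matroid, as a function of `t`, given by the
Whitney rank-generating-function formula `χ_M(t) = ∑_{S ⊆ E} (-1)^|S| t^(rk M - rk S)`
(which agrees with the Möbius-function definition for loopless matroids). -/
noncomputable def Matroid.charPoly (M : Matroid α) (t : ℚ) : ℚ :=
  ∑ᶠ (S : Set α) (_ : S ⊆ M.E), (-1 : ℚ) ^ S.ncard * t ^ (M.rank - M.rkSet S)

/-- The beta invariant of a matroid, via Crapo's formula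
`β(M) = (-1)^(rk M) ∑_{S ⊆ E} (-1)^|S| rk S`. -/
noncomputable def Matroid.betaInv (M : Matroid α) : ℚ :=
  (-1 : ℚ) ^ M.rank * ∑ᶠ (S : Set α) (_ : S ⊆ M.E), (-1 : ℚ) ^ S.ncard * (M.rkSet S : ℚ)

/-- The invariant `c_M = -2^(rk M) · χ_M(1/2)`. -/
noncomputable def Matroid.cInv (M : Matroid α) : ℚ :=
  - 2 ^ M.rank * M.charPoly (1/2)

/-- `P` is a family of Kazhdan–Lusztig polynomials for the (finite loopless) matroids on `α`:
`P_∅ = 1`, `deg P_M < rk M / 2` for matroids of positive rank, and the defining functional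
equation `(-t)^(rk M) P_M(1/t) - P_M(t) = ∑_{F > ∅} χ_{M^F}(t) P_{M_F}(t)` holds. -/
def IsKLFamily (P : Matroid α → Polynomial ℚ) : Prop :=
  P (Matroid.emptyOn α) = 1 ∧
  (∀ N : Matroid α, N.E.Finite → N.IsLoopless → 0 < N.rank →
      2 * (P N).natDegree < N.rank) ∧
  (∀ N : Matroid α, N.E.Finite → N.IsLoopless → ∀ t : ℚ, t ≠ 0 →
      (-t) ^ N.rank * (P N).eval (1/t) - (P N).eval t =
        ∑ᶠ (F : Set α) (_ : N.IsFlat F ∧ F.Nonempty),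
          (N ↾ F).charPoly t * (P (N.con F)).eval t)

/-- The microlocal multiplicity of a matroid:
`m_M = (-1)^(rk M) ∑_{F ∈ L(M)} 2^(rk F) χ_{M^F}(1/2) P_{M_F}(1)`. -/
noncomputable def microMult (P : Matroid α → Polynomial ℚ) (M : Matroid α) : ℚ :=
  (-1 : ℚ) ^ M.rank *
    ∑ᶠ (F : Set α) (_ : M.IsFlat F),
      2 ^ M.rkSet F * (M ↾ F).charPoly (1/2) * (P (M.con F)).eval 1

/-!
Unfolding `m_{M/F}` and identifying the flats of `M/F` with the flats `G ⊇ F` of `M` (via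
`X ↦ X ∪ F`), the right-hand side becomes
`(-1)^{rk M} ∑_G P_{M/G}(1) ∑_{F ⊆ G} χ_{M|F}(2) 2^{rk G - rk F} χ_{(M|G)/F}(1/2)`,
both sums over flats. The inner sum is `[G = ∅]`. Sets `F ⊆ G` that are not flats may be added
to it, since then `(M|G)/F` has a loop and its characteristic polynomial vanishes. The Whitney
formula then turns it into an alternating sum, over `B ⊆ A ⊆ G` and `C ⊆ G \ A`, of
`2^{rk(A ∪ C) - rk B}`. Regrouping by `D = A ∪ C`, the sum over `C ⊆ D \ B` of `(-1)^{|C|}` only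
survives for `B = D`, leaving `∑_{B ⊆ G} (-1)^{|B|} = [G = ∅]`.
-/

namespace Finset

variable {ι β R : Type*} [DecidableEq ι]

theorem sum_powerset_sum_powerset_sdiff [AddCommMonoid β] (u : Finset ι)
    (k : Finset ι → Finset ι → β) :
    ∑ A ∈ u.powerset, ∑ C ∈ (u \ A).powerset, k A C =
      ∑ D ∈ u.powerset, ∑ C ∈ D.powerset, k (D \ C) C := by
  rw [sum_sigma', sum_sigma']
  refine sum_nbij' (fun x => ⟨x.1 ∪ x.2, x.2⟩) (fun y => ⟨y.1 \ y.2, y.2⟩) ?_ ?_ ?_ ?_ ?_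
  · rintro ⟨A, C⟩ h
    simp only [mem_sigma, mem_powerset, subset_sdiff] at h ⊢
    exact ⟨union_subset h.1 h.2.1, subset_union_right⟩
  · rintro ⟨D, C⟩ h
    simp only [mem_sigma, mem_powerset, subset_sdiff] at h ⊢
    exact ⟨sdiff_subset.trans h.1, h.2.trans h.1, disjoint_sdiff_self_right⟩
  · rintro ⟨A, C⟩ h
    simp only [mem_sigma, mem_powerset, subset_sdiff] at h
    simp [union_sdiff_cancel_right h.2.2.symm]
  · rintro ⟨D, C⟩ h
    simp only [mem_sigma, mem_powerset] at h
    simp [sdiff_union_of_subset h.2]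
  · rintro ⟨A, C⟩ h
    simp only [mem_sigma, mem_powerset, subset_sdiff] at h
    simp [union_sdiff_cancel_right h.2.2.symm]

theorem sum_powerset_sum_powerset_sdiff_comm [AddCommMonoid β] (D : Finset ι)
    (k : Finset ι → Finset ι → β) :
    ∑ C ∈ D.powerset, ∑ B ∈ (D \ C).powerset, k B C =
      ∑ B ∈ D.powerset, ∑ C ∈ (D \ B).powerset, k B C :=
  sum_comm' fun C B => by
    simp only [mem_powerset, subset_sdiff, disjoint_comm (a := B)]
    tauto

theorem sum_powerset_neg_one_pow_card' [Ring R] (s : Finset ι) :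
    ∑ A ∈ s.powerset, (-1 : R) ^ #A = if s = ∅ then 1 else 0 := by
  have h := congrArg (Int.cast : ℤ → R) (sum_powerset_neg_one_pow_card (x := s))
  push_cast at h
  exact h

theorem sum_powerset_sum_powerset_sum_powerset_sdiff_neg_one_pow [CommRing R] (u : Finset ι)
    (g : Finset ι → Finset ι → R) :
    ∑ A ∈ u.powerset, ∑ B ∈ A.powerset, ∑ C ∈ (u \ A).powerset, (-1) ^ (#B + #C) * g B (A ∪ C) =
      ∑ D ∈ u.powerset, (-1) ^ #D * g D D := by
  calc _ = ∑ D ∈ u.powerset, ∑ C ∈ D.powerset, ∑ B ∈ (D \ C).powerset,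
          (-1) ^ (#B + #C) * g B D := by
        simp_rw [sum_comm (s := Finset.powerset _) (t := Finset.powerset (u \ _))]
        rw [sum_powerset_sum_powerset_sdiff u fun A C => ∑ B ∈ A.powerset,
          (-1) ^ (#B + #C) * g B (A ∪ C)]
        refine sum_congr rfl fun D _ => sum_congr rfl fun C hC => ?_
        rw [sdiff_union_of_subset (mem_powerset.1 hC)]
    _ = ∑ D ∈ u.powerset, ∑ B ∈ D.powerset, (-1) ^ #B * g B D *
          ∑ C ∈ (D \ B).powerset, (-1) ^ #C := by
        refine sum_congr rfl fun D _ => ?_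
        rw [sum_powerset_sum_powerset_sdiff_comm]
        refine sum_congr rfl fun B _ => ?_
        rw [mul_sum]
        exact sum_congr rfl fun C _ => by ring
    _ = ∑ D ∈ u.powerset, (-1) ^ #D * g D D := by
        refine sum_congr rfl fun D _ => ?_
        rw [sum_eq_single_of_mem D (mem_powerset_self D) fun B hB hBD => ?_]
        · rw [Finset.sdiff_self, sum_powerset_neg_one_pow_card', if_pos rfl, mul_one]
        · have hDB : ¬ D ⊆ B := fun hDB => hBD (Subset.antisymm (mem_powerset.1 hB) hDB)
          rw [sum_powerset_neg_one_pow_card', if_neg (mt sdiff_eq_empty_iff_subset.1 hDB),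
            mul_zero]

end Finset

section Finsum

variable {β R : Type*}

theorem finsum_cond_eq_sum_powerset [AddCommMonoid R] {p : Set α → Prop} [DecidablePred p]
    {u : Finset α} (hp : ∀ S, p S → S ⊆ u) (f : Set α → R) :
    ∑ᶠ (S) (_ : p S), f S = ∑ A ∈ u.powerset, if p A then f A else 0 := by
  rw [← Finset.sum_filter, finsum_cond_eq_sum_of_cond_iff f
    (t := (u.powerset.filter fun A : Finset α => p A).map ⟨(↑), Finset.coe_injective⟩)
    fun {S} _ => ?_, Finset.sum_map]
  · rfl
  simp only [Finset.mem_map, Finset.mem_filter, Finset.mem_powerset, Function.Embedding.coeFn_mk]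
  constructor
  · intro hS
    exact ⟨(u.finite_toSet.subset (hp S hS)).toFinset,
      ⟨by simpa using hp S hS, by simpa using hS⟩, by simp⟩
  · rintro ⟨A, ⟨-, hA⟩, rfl⟩
    exact hA

theorem finsum_cond_finsum_cond_comm [AddCommMonoid R] {p : β → Prop} (hp : {x | p x}.Finite)
    (r : β → β → Prop) (f : β → β → R) :
    ∑ᶠ (x) (_ : p x), ∑ᶠ (y) (_ : p y ∧ r x y), f x y =
      ∑ᶠ (y) (_ : p y), ∑ᶠ (x) (_ : p x ∧ r x y), f x y := by
  classical
  have hsub (q : β → Prop) (g : β → R) :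
      ∑ᶠ (x) (_ : p x ∧ q x), g x = ∑ x ∈ hp.toFinset with q x, g x :=
    finsum_cond_eq_sum_of_cond_iff g fun {x} _ => by simp
  have hall (g : β → R) : ∑ᶠ (x) (_ : p x), g x = ∑ x ∈ hp.toFinset, g x :=
    finsum_mem_eq_finite_toFinset_sum g hp
  simp only [hsub, hall]
  refine Finset.sum_comm' fun x y => ?_
  simp only [Finset.mem_filter, Set.Finite.mem_toFinset, Set.mem_ofPred_eq]
  tauto

theorem mul_finsum_cond [NonUnitalNonAssocSemiring R] [NoZeroDivisors R] (p : β → Prop)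
    (f : β → R) (r : R) :
    r * ∑ᶠ (x) (_ : p x), f x = ∑ᶠ (x) (_ : p x), r * f x :=
  mul_finsum_mem (s := {x | p x}) f r

theorem finsum_cond_mul [NonUnitalNonAssocSemiring R] [NoZeroDivisors R] (p : β → Prop)
    (f : β → R) (r : R) :
    (∑ᶠ (x) (_ : p x), f x) * r = ∑ᶠ (x) (_ : p x), f x * r :=
  finsum_mem_mul (s := {x | p x}) f r

end Finsum

namespace Matroid

open Set

variable {M N : Matroid α} {C F G R X : Set α} {e : α} {t : ℚ}

theorem con_eq_contract (M : Matroid α) (C : Set α) : M.con C = M ／ C := rfl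

theorem eRk_contract_add_eRk (M : Matroid α) (C X : Set α) :
    (M ／ C).eRk X + M.eRk C = M.eRk (X ∪ C) := by
  obtain ⟨J, hJ⟩ := M.exists_isBasis' C
  obtain ⟨I, hI, hJI⟩ :=
    hJ.indep.subset_isBasis'_of_subset (hJ.subset.trans subset_union_right : J ⊆ X ∪ C)
  have hIC : (M ／ C).IsBasis' (I \ C) ((X ∪ C) \ C) :=
    hI.contract_isBasis' hJ (hI.indep.subset (union_subset sdiff_subset hJI))
  have hIJ : I ∩ C = J := (hJ.eq_of_subset_indep (hI.indep.inter_right C)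
    (subset_inter hJI hJ.subset) inter_subset_right).symm
  have hX : (M ／ C).eRk X = (M ／ C).eRk ((X ∪ C) \ C) := by
    rw [← eRk_inter_ground, ← (M ／ C).eRk_inter_ground ((X ∪ C) \ C), contract_ground]
    congr 1
    ext x
    simp only [mem_inter_iff, mem_sdiff, mem_union]
    tauto
  rw [hX, hIC.eRk_eq_encard, hJ.eRk_eq_encard, hI.eRk_eq_encard, ← hIJ,
    ← encard_union_eq (disjoint_sdiff_left.mono_right inter_subset_right), sdiff_union_inter]

theorem rkSet_eq_toNat_eRk [M.RankFinite] (X : Set α) : M.rkSet X = (M.eRk X).toNat := by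
  obtain ⟨I, hI⟩ := M.exists_isBasis' X
  have hItop : I.encard ≠ ⊤ := ((M.isRkFinite_set X).finite_of_isBasis' hI).encard_lt_top.ne
  have hle (J : {J : Set α // M.Indep J ∧ J ⊆ X}) : J.1.ncard ≤ I.ncard := by
    have hJ := J.2.1.encard_le_eRk_of_subset J.2.2
    rw [hI.eRk_eq_encard] at hJ
    exact ENat.toNat_le_toNat hJ hItop
  rw [hI.eRk_eq_encard]
  exact le_antisymm (ciSup_le' hle)
    (le_ciSup_of_le ⟨I.ncard, Set.forall_mem_range.2 hle⟩ ⟨I, hI.indep, hI.subset⟩ le_rfl)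

theorem charPoly_eq_sum_powerset {u : Finset α} (hu : (u : Set α) = M.E) (t : ℚ) :
    M.charPoly t = ∑ A ∈ u.powerset, (-1) ^ A.card * t ^ (M.rank - M.rkSet A) := by
  classical
  rw [charPoly, finsum_cond_eq_sum_powerset fun S hS => hu ▸ hS]
  refine Finset.sum_congr rfl fun A hA => ?_
  rw [if_pos (hu ▸ Finset.coe_subset.2 (Finset.mem_powerset.1 hA)), ncard_coe_finset]

section RankFinite

variable [M.RankFinite] [N.RankFinite]

theorem rkSet_mono {X Y : Set α} (hXY : X ⊆ Y) : M.rkSet X ≤ M.rkSet Y := by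
  simp only [rkSet_eq_toNat_eRk]
  exact ENat.toNat_le_toNat (M.eRk_mono hXY) (M.isRkFinite_set Y).eRk_lt_top.ne

theorem rkSet_le_rank (X : Set α) : M.rkSet X ≤ M.rank := by
  simp only [Matroid.rank, rkSet_eq_toNat_eRk, eRk_ground]
  exact ENat.toNat_le_toNat (M.eRk_le_eRank X) (M.eRank_ne_top_iff.2 ‹_›)

theorem rkSet_restrict (hXR : X ⊆ R) : (M ↾ R).rkSet X = M.rkSet X := by
  rw [rkSet_eq_toNat_eRk, rkSet_eq_toNat_eRk, restrict_eRk_eq M hXR]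

theorem rank_restrict (R : Set α) : (M ↾ R).rank = M.rkSet R :=
  rkSet_restrict subset_rfl

theorem rkSet_contract (C X : Set α) : (M ／ C).rkSet X = M.rkSet (X ∪ C) - M.rkSet C := by
  simp only [rkSet_eq_toNat_eRk, ← eRk_contract_add_eRk M C X]
  rw [ENat.toNat_add ((M ／ C).isRkFinite_set X).eRk_lt_top.ne
    (M.isRkFinite_set C).eRk_lt_top.ne, Nat.add_sub_cancel]

theorem rank_contract (hC : C ⊆ M.E) : (M ／ C).rank = M.rank - M.rkSet C := by
  rw [Matroid.rank, rkSet_contract, contract_ground, sdiff_union_of_subset hC, Matroid.rank]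

theorem rkSet_insert_of_isLoop (he : M.IsLoop e) (X : Set α) :
    M.rkSet (insert e X) = M.rkSet X := by
  rw [rkSet_eq_toNat_eRk, rkSet_eq_toNat_eRk, insert_eq, union_comm,
    M.eRk_eq_eRk_union_eRk_le_zero X he.eRk_eq.le]

theorem charPoly_eq_zero_of_isLoop [M.Finite] (he : M.IsLoop e) (t : ℚ) : M.charPoly t = 0 := by
  have hfin := M.ground_finite
  change ∑ᶠ S ∈ 𝒫 M.E, _ = 0
  rw [finsum_mem_powerset_sdiff_elem hfin he.mem_ground,
    ← finsum_mem_add_distrib (hfin.subset sdiff_subset).powerset]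
  refine finsum_mem_of_eqOn_zero fun S hS => ?_
  have heS : e ∉ S := fun h => (hS h).2 rfl
  rw [Pi.zero_apply, ncard_insert_of_notMem heS (hfin.subset (hS.trans sdiff_subset)),
    rkSet_insert_of_isLoop he, pow_succ]
  ring

theorem charPoly_restrict_mul_charPoly_contract [DecidableEq α] {u A : Finset α}
    (hu : (u : Set α) = N.E) (hA : A ⊆ u) (ht : t ≠ 0) :
    (N ↾ A).charPoly t * t ^ (N.rank - N.rkSet A) * (N ／ A).charPoly (1 / t) =
      ∑ B ∈ A.powerset, ∑ C ∈ (u \ A).powerset,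
        (-1) ^ (B.card + C.card) * (t ^ N.rkSet ↑(A ∪ C) / t ^ N.rkSet ↑B) := by
  have hAE : (A : Set α) ⊆ N.E := hu ▸ Finset.coe_subset.2 hA
  rw [charPoly_eq_sum_powerset (M := N ↾ A) rfl,
    charPoly_eq_sum_powerset (M := N ／ A) (u := u \ A)
      (by rw [contract_ground, Finset.coe_sdiff, hu]),
    Finset.sum_mul, Finset.sum_mul]
  refine Finset.sum_congr rfl fun B hB => ?_
  rw [Finset.mul_sum]
  refine Finset.sum_congr rfl fun C _ => ?_
  have hBA : (B : Set α) ⊆ A := Finset.coe_subset.2 (Finset.mem_powerset.1 hB)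
  have hrkBA : N.rkSet B ≤ N.rkSet A := rkSet_mono hBA
  have hrkAC : N.rkSet A ≤ N.rkSet ↑(A ∪ C) := rkSet_mono (by simp)
  have hrkC : N.rkSet ↑(A ∪ C) ≤ N.rank := rkSet_le_rank _
  rw [rank_restrict, rkSet_restrict hBA, rank_contract hAE, rkSet_contract, ← Finset.coe_union,
    Finset.union_comm C A,
    show N.rank - N.rkSet A - (N.rkSet ↑(A ∪ C) - N.rkSet A) = N.rank - N.rkSet ↑(A ∪ C) by omega,
    pow_sub₀ _ ht hrkBA, pow_sub₀ _ ht (rkSet_le_rank _), div_pow, one_pow, pow_sub₀ _ ht hrkC,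
    pow_add]
  field_simp

end RankFinite

theorem sum_charPoly_restrict_mul_charPoly_contract [DecidableEq α] {u : Finset α}
    (hu : (u : Set α) = N.E) (ht : t ≠ 0) :
    ∑ A ∈ u.powerset, (N ↾ A).charPoly t * t ^ (N.rank - N.rkSet A) * (N ／ A).charPoly (1 / t) =
      if u = ∅ then 1 else 0 := by
  have : N.Finite := ⟨hu ▸ u.finite_toSet⟩
  rw [Finset.sum_congr rfl fun A hA =>
      charPoly_restrict_mul_charPoly_contract hu (Finset.mem_powerset.1 hA) ht,
    Finset.sum_powerset_sum_powerset_sum_powerset_sdiff_neg_one_pow u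
      fun B D => t ^ N.rkSet ↑D / t ^ N.rkSet ↑B]
  simp_rw [div_self (pow_ne_zero _ ht), mul_one]
  exact Finset.sum_powerset_neg_one_pow_card' u

theorem IsLoopless.isFlat_empty (hM : M.IsLoopless) : M.IsFlat ∅ := by
  have : M.Loopless := loopless_iff_forall_isNonloop.2 fun e he => indep_singleton.1 (hM e he)
  rw [isFlat_iff_closure_eq, closure_empty, loops_eq_empty]

theorem isFlat_contract_iff (hC : C ⊆ M.E) :
    (M ／ C).IsFlat X ↔ M.IsFlat (X ∪ C) ∧ Disjoint X C := by
  rw [isFlat_iff_closure_eq, isFlat_iff_closure_eq, contract_closure_eq]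
  constructor
  · intro h
    have hdj : Disjoint X C := h ▸ disjoint_sdiff_left
    have hXE : X ⊆ M.E := h ▸ sdiff_subset.trans (M.closure_subset_ground _)
    refine ⟨subset_antisymm (fun y hy => ?_) (M.subset_closure _ (union_subset hXE hC)), hdj⟩
    by_cases hyC : y ∈ C
    · exact Or.inr hyC
    · exact Or.inl (h ▸ ⟨hy, hyC⟩)
  · rintro ⟨h, hdj⟩
    rw [h, union_sdiff_right, hdj.sdiff_eq_left]

theorem IsFlat.isFlat_restrict_iff (hG : M.IsFlat G) :
    (M ↾ G).IsFlat F ↔ M.IsFlat F ∧ F ⊆ G := by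
  rw [isFlat_iff_closure_eq, isFlat_iff_closure_eq, restrict_closure_eq',
    sdiff_eq_empty.2 hG.subset_ground, union_empty]
  constructor
  · intro h
    have hFG : F ⊆ G := h ▸ inter_subset_right
    rw [inter_eq_self_of_subset_left hFG] at h
    refine ⟨subset_antisymm (fun y hy => ?_)
      (M.subset_closure F (hFG.trans hG.subset_ground)), hFG⟩
    rw [← h]
    exact ⟨hy, hG.closure ▸ M.closure_subset_closure hFG hy⟩
  · rintro ⟨hF, hFG⟩
    rw [inter_eq_self_of_subset_left hFG, hF, inter_eq_self_of_subset_left hFG]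

theorem exists_isLoop_contract_of_not_isFlat (hX : X ⊆ M.E) (hX' : ¬ M.IsFlat X) :
    ∃ e, (M ／ X).IsLoop e := by
  rw [isFlat_iff_closure_eq] at hX'
  obtain ⟨e, hecl, heX⟩ :=
    exists_of_ssubset ((M.subset_closure X hX).ssubset_of_ne (Ne.symm hX'))
  exact ⟨e, contract_isLoop_iff_mem_closure.2 ⟨hecl, heX⟩⟩

theorem finsum_isFlat_contract {β : Type*} [AddCommMonoid β] (hC : C ⊆ M.E) (f : Set α → β) :
    ∑ᶠ (X) (_ : (M ／ C).IsFlat X), f X = ∑ᶠ (G) (_ : M.IsFlat G ∧ C ⊆ G), f (G \ C) := by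
  refine finsum_mem_eq_of_bijOn (· ∪ C) ⟨fun X hX => ?_, fun X hX Y hY hXY => ?_,
    fun G hG => ?_⟩ fun X hX => ?_
  · exact ⟨((isFlat_contract_iff hC).1 hX).1, subset_union_right⟩
  · have hXC := ((isFlat_contract_iff hC).1 hX).2
    have hYC := ((isFlat_contract_iff hC).1 hY).2
    simpa [hXC.sdiff_eq_left, hYC.sdiff_eq_left] using congrArg (· \ C) hXY
  · refine ⟨G \ C, (isFlat_contract_iff hC).2 ?_, sdiff_union_of_subset hG.2⟩
    rw [sdiff_union_of_subset hG.2]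
    exact ⟨hG.1, disjoint_sdiff_left⟩
  · simp only [union_sdiff_right, ((isFlat_contract_iff hC).1 hX).2.sdiff_eq_left]

theorem finsum_isFlat_charPoly_restrict_mul_charPoly_contract [N.Finite] (ht : t ≠ 0) :
    ∑ᶠ (F) (_ : N.IsFlat F),
        (N ↾ F).charPoly t * t ^ (N.rank - N.rkSet F) * (N ／ F).charPoly (1 / t) =
      if N.E = ∅ then 1 else 0 := by
  classical
  obtain ⟨u, hu⟩ : ∃ u : Finset α, ↑u = N.E :=
    ⟨N.ground_finite.toFinset, N.ground_finite.coe_toFinset⟩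
  rw [finsum_cond_eq_sum_powerset (u := u) fun F hF => hu ▸ hF.subset_ground]
  simp only [← hu, Finset.coe_eq_empty]
  rw [← sum_charPoly_restrict_mul_charPoly_contract hu ht]
  refine Finset.sum_congr rfl fun A hA => ite_eq_left_iff.2 fun hA' => ?_
  obtain ⟨e, he⟩ := exists_isLoop_contract_of_not_isFlat
    (hu ▸ Finset.coe_subset.2 (Finset.mem_powerset.1 hA)) hA'
  rw [charPoly_eq_zero_of_isLoop he, mul_zero]

theorem IsFlat.finsum_isFlat_subset_charPoly_restrict_mul_charPoly_contract [M.Finite]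
    (hG : M.IsFlat G) (ht : t ≠ 0) :
    ∑ᶠ (F) (_ : M.IsFlat F ∧ F ⊆ G),
        (M ↾ F).charPoly t * t ^ (M.rkSet G - M.rkSet F) * ((M ↾ G) ／ F).charPoly (1 / t) =
      if G = ∅ then 1 else 0 := by
  have : (M ↾ G).Finite := restrict_finite (M.ground_finite.subset hG.subset_ground)
  rw [← restrict_ground_eq (M := M) (R := G),
    ← finsum_isFlat_charPoly_restrict_mul_charPoly_contract ht, restrict_ground_eq]
  refine finsum_congr fun F => ?_
  rw [hG.isFlat_restrict_iff]
  refine finsum_congr fun hF => ?_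
  rw [restrict_restrict_eq _ hF.2, rank_restrict, rkSet_restrict hF.2]

theorem IsFlat.microMult_contract [M.RankFinite] (P : Matroid α → Polynomial ℚ)
    (hF : M.IsFlat F) :
    microMult P (M.con F) = (-1) ^ (M.rank - M.rkSet F) *
      ∑ᶠ (G) (_ : M.IsFlat G ∧ F ⊆ G),
        2 ^ (M.rkSet G - M.rkSet F) * ((M ↾ G) ／ F).charPoly (1 / 2) * (P (M ／ G)).eval 1 := by
  simp only [microMult, con_eq_contract]
  rw [rank_contract hF.subset_ground, finsum_isFlat_contract hF.subset_ground]
  congr 1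
  refine finsum_congr fun G => finsum_congr fun hG => ?_
  rw [rkSet_contract, sdiff_union_of_subset hG.2,
    ← restrict_contract_eq_contract_restrict _ hG.2, contract_contract, union_sdiff_cancel hG.2]

theorem IsFlat.microMult_contract_mul_charPoly [M.RankFinite] (P : Matroid α → Polynomial ℚ)
    (hF : M.IsFlat F) :
    microMult P (M.con F) * (-1) ^ M.rkSet F * (M ↾ F).charPoly 2 =
      ∑ᶠ (G) (_ : M.IsFlat G ∧ F ⊆ G), (-1) ^ M.rank * (P (M ／ G)).eval 1 *
        ((M ↾ F).charPoly 2 * 2 ^ (M.rkSet G - M.rkSet F) * ((M ↾ G) ／ F).charPoly (1 / 2)) := by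
  have hsign : (-1 : ℚ) ^ (M.rank - M.rkSet F) * (-1) ^ M.rkSet F = (-1) ^ M.rank := by
    rw [← pow_add, Nat.sub_add_cancel (rkSet_le_rank F)]
  rw [hF.microMult_contract, mul_finsum_cond, finsum_cond_mul, finsum_cond_mul]
  refine finsum_congr fun G => finsum_congr fun _ => ?_
  linear_combination 2 ^ (M.rkSet G - M.rkSet F) * ((M ↾ G) ／ F).charPoly (1 / 2) *
    (P (M ／ G)).eval 1 * (M ↾ F).charPoly 2 * hsign

end Matroid

theorem microMult_relation_general (P : Matroid α → Polynomial ℚ)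
    (M : Matroid α) (hfin : M.E.Finite) (hl : M.IsLoopless) :
    (-1 : ℚ) ^ M.rank * (P M).eval 1 =
      ∑ᶠ (F : Set α) (_ : M.IsFlat F),
        microMult P (M.con F) * (-1 : ℚ) ^ M.rkSet F * (M ↾ F).charPoly 2 := by
  have : M.Finite := ⟨hfin⟩
  have hflats : {F | M.IsFlat F}.Finite := hfin.finite_subsets.subset fun F hF => hF.subset_ground
  let c (F G : Set α) : ℚ :=
    (M ↾ F).charPoly 2 * 2 ^ (M.rkSet G - M.rkSet F) * ((M ↾ G) ／ F).charPoly (1 / 2)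
  symm
  calc _ = ∑ᶠ (F) (_ : M.IsFlat F), ∑ᶠ (G) (_ : M.IsFlat G ∧ F ⊆ G),
        (-1) ^ M.rank * (P (M ／ G)).eval 1 * c F G :=
        finsum_congr fun F => finsum_congr fun hF => hF.microMult_contract_mul_charPoly P
    _ = ∑ᶠ (G) (_ : M.IsFlat G), ∑ᶠ (F) (_ : M.IsFlat F ∧ F ⊆ G),
        (-1) ^ M.rank * (P (M ／ G)).eval 1 * c F G :=
        finsum_cond_finsum_cond_comm hflats _ _
    _ = ∑ᶠ (G) (_ : M.IsFlat G), (-1) ^ M.rank * (P (M ／ G)).eval 1 * if G = ∅ then 1 else 0 := by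
        refine finsum_congr fun G => finsum_congr fun hG => ?_
        rw [← hG.finsum_isFlat_subset_charPoly_restrict_mul_charPoly_contract two_ne_zero,
          mul_finsum_cond]
    _ = (-1) ^ M.rank * (P M).eval 1 := by
        classical
        rw [finsum_eq_single _ ∅ fun G hG => by simp [hG], finsum_eq_if, if_pos hl.isFlat_empty,
          if_pos rfl, Matroid.contract_empty, mul_one]

/-- The microlocal multiplicity `m_M = (-1)^(rk M) ∑_F 2^(rk F) χ_{M^F}(1/2) P_{M_F}(1)`
satisfies the relation
`(-1)^(rk M) P_M(1) = ∑_{F ∈ L(M)} m_{M_F} (-1)^(rk F) χ_{M^F}(2)`. -/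
theorem microMult_relation (P : Matroid α → Polynomial ℚ) (hP : IsKLFamily P)
    (M : Matroid α) (hfin : M.E.Finite) (hl : M.IsLoopless) :
    (-1 : ℚ) ^ M.rank * (P M).eval 1 =
      ∑ᶠ (F : Set α) (_ : M.IsFlat F),
        microMult P (M.con F) * (-1 : ℚ) ^ M.rkSet F * (M ↾ F).charPoly 2 :=
  microMult_relation_general P M hfin hl
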